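/- arXiv:2108.09685 — 2 statements merged into one kernel-verified Lean document; each statement's English description precedes it below -/
import Mathlib

section
/- Let (G, φ, β, λ) be a conformal H-minimal Legendrian datum on an open set Ω ⊆ ℝ². Then on Ω the two identities hold: ∇β·∇(|G|²) = Δφ, and ∇β·∇φ = e^{2λ} − (1/4)·Δ(|G|²). -/
open MeasureTheory Real Set
noncomputable section

abbrev R2 : Type := EuclideanSpace ℝ (Fin 2)
abbrev R4 : Type := EuclideanSpace ℝ (Fin 4)

/-- Real inner product on ℝ⁴. -/
def rin (u v : R4) : ℝ := inner ℝ u v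

/-- Standard complex structure on ℝ⁴ ≅ ℂ². -/
def Jc (v : R4) : R4 := (WithLp.equiv 2 (Fin 4 → ℝ)).symm ![-v 1, v 0, -v 3, v 2]

/-- Partial derivative in the j-th coordinate direction. -/
def pd {E : Type*} [NormedAddCommGroup E] [NormedSpace ℝ E]
    (j : Fin 2) (f : R2 → E) (x : R2) : E :=
  fderiv ℝ f x (EuclideanSpace.single j 1)

/-- Flat Laplacian acting componentwise. -/
def lap {E : Type*} [NormedAddCommGroup E] [NormedSpace ℝ E]
    (f : R2 → E) (x : R2) : E :=
  pd 0 (pd 0 f) x + pd 1 (pd 1 f) x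

structure HMinimalDatum (Ω : Set R2) (G : R2 → R4) (φ β lam : R2 → ℝ) : Prop where
  isOpen : IsOpen Ω
  smooth_G : ∀ x ∈ Ω, ContDiffAt ℝ (⊤ : ℕ∞) G x
  smooth_φ : ∀ x ∈ Ω, ContDiffAt ℝ (⊤ : ℕ∞) φ x
  smooth_β : ∀ x ∈ Ω, ContDiffAt ℝ (⊤ : ℕ∞) β x
  smooth_lam : ∀ x ∈ Ω, ContDiffAt ℝ (⊤ : ℕ∞) lam x
  conf_orth : ∀ x ∈ Ω, rin (pd 0 G x) (pd 1 G x) = 0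
  conf_norm₁ : ∀ x ∈ Ω, ‖pd 0 G x‖ = Real.exp (lam x)
  conf_norm₂ : ∀ x ∈ Ω, ‖pd 1 G x‖ = Real.exp (lam x)
  lagrangian : ∀ x ∈ Ω, rin (pd 0 G x) (Jc (pd 1 G x)) = 0
  legendrian : ∀ x ∈ Ω, ∀ j : Fin 2, pd j φ x = rin (G x) (Jc (pd j G x))
  harmonic_β : ∀ x ∈ Ω, lap β x = 0
  hminimal : ∀ x ∈ Ω,
    Jc (lap G x) = (2 * pd 0 β x) • pd 0 G x + (2 * pd 1 β x) • pd 1 G x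

/-- The Folland–Korányi gauge composed with the Legendrian immersion. -/
def kGauge (G : R2 → R4) (φ : R2 → ℝ) (x : R2) : ℝ :=
  (‖G x‖ ^ 4 + 4 * φ x ^ 2) ^ ((1:ℝ)/4)

/-- The phase σ = 2φ/ρ². -/
def phase (G : R2 → R4) (φ : R2 → ℝ) (x : R2) : ℝ := 2 * φ x / ‖G x‖ ^ 2

/-- Dirichlet energy density |∇σ|²/(1+σ²)² of arctan σ. -/
def energyDensity (G : R2 → R4) (φ : R2 → ℝ) (x : R2) : ℝ :=
  ((pd 0 (phase G φ) x) ^ 2 + (pd 1 (phase G φ) x) ^ 2) / (1 + (phase G φ x) ^ 2) ^ 2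


lemma Jc_apply (v : R4) :
    Jc v 0 = -v 1 ∧ Jc v 1 = v 0 ∧ Jc v 2 = -v 3 ∧ Jc v 3 = v 2 := by
  refine ⟨?_, ?_, ?_, ?_⟩ <;> simp [Jc]

def JL : R4 →L[ℝ] R4 :=
  LinearMap.toContinuousLinearMap
  { toFun := Jc
    map_add' := by
      intro u v
      ext i
      fin_cases i <;> simp [Jc] <;> ring
    map_smul' := by
      intro c v
      ext i
      fin_cases i <;> simp [Jc] }

lemma JL_eq (v : R4) : JL v = Jc v := rfl

lemma rin_eq (u v : R4) : rin u v = u 0 * v 0 + u 1 * v 1 + u 2 * v 2 + u 3 * v 3 := by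
  simp [rin, PiLp.inner_apply, Fin.sum_univ_four, RCLike.inner_apply]; ring

lemma rin_self_J (v : R4) : rin v (JL v) = 0 := by
  simp [rin_eq, JL_eq, Jc]; ring

lemma JL_JL (v : R4) : JL (JL v) = -v := by
  ext i
  fin_cases i <;> simp [JL_eq, Jc]

lemma contDiffAt_pd {E : Type*} [NormedAddCommGroup E] [NormedSpace ℝ E]
    (j : Fin 2) {f : R2 → E} {x : R2} (hf : ContDiffAt ℝ (⊤ : ℕ∞) f x) :
    ContDiffAt ℝ (⊤ : ℕ∞) (pd j f) x :=
  (hf.fderiv_right (by simp)).clm_apply contDiffAt_const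

lemma pd_clm (A : R4 →L[ℝ] R4) {f : R2 → R4} (j : Fin 2) {x : R2}
    (hf : DifferentiableAt ℝ f x) :
    pd j (fun y => A (f y)) x = A (pd j f x) := by
  unfold pd
  have : fderiv ℝ (fun y => A (f y)) x = A.comp (fderiv ℝ f x) :=
    (A.hasFDerivAt.comp x hf.hasFDerivAt).fderiv
  rw [this]
  rfl

lemma pd_rin {f g : R2 → R4} (j : Fin 2) {x : R2}
    (hf : DifferentiableAt ℝ f x) (hg : DifferentiableAt ℝ g x) :
    pd j (fun y => rin (f y) (g y)) x = rin (f x) (pd j g x) + rin (pd j f x) (g x) := by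
  unfold pd rin
  exact fderiv_inner_apply ℝ hf hg _

lemma pd_const_mul {h : R2 → ℝ} (c : ℝ) (j : Fin 2) {x : R2}
    (hh : DifferentiableAt ℝ h x) :
    pd j (fun y => c * h y) x = c * pd j h x := by
  unfold pd
  rw [fderiv_const_mul hh c]
  simp

lemma rin_add_right (u a b : R4) : rin u (a + b) = rin u a + rin u b :=
  inner_add_right u a b

lemma rin_smul_right (u a : R4) (c : ℝ) : rin u (c • a) = c * rin u a :=
  real_inner_smul_right u a c

lemma rin_neg_right (u a : R4) : rin u (-a) = -rin u a :=
  inner_neg_right u a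

lemma rin_comm (u v : R4) : rin u v = rin v u := (real_inner_comm v u)


/-- Equations (kora-4re) of the paper in conformal (flat) form: for a conformal H-minimal
Legendrian datum, `∇β·∇ρ² = Δφ` and `∇β·∇φ = e^{2λ} − 4⁻¹Δρ²`. -/
theorem kora_identities (Ω : Set R2) (G : R2 → R4) (φ β lam : R2 → ℝ)
    (hdat : HMinimalDatum Ω G φ β lam) :
    ∀ x ∈ Ω,
      (pd 0 β x * pd 0 (fun y => ‖G y‖ ^ 2) x +
          pd 1 β x * pd 1 (fun y => ‖G y‖ ^ 2) x = lap φ x) ∧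
      (pd 0 β x * pd 0 φ x + pd 1 β x * pd 1 φ x =
        Real.exp (2 * lam x) - (1/4) * lap (fun y => ‖G y‖ ^ 2) x) := by
  intro x hx
  have hΩ : Ω ∈ nhds x := hdat.isOpen.mem_nhds hx
  have hGc : ∀ y ∈ Ω, ContDiffAt ℝ (⊤ : ℕ∞) G y := hdat.smooth_G
  have dG : ∀ y ∈ Ω, DifferentiableAt ℝ G y :=
    fun y hy => (hGc y hy).differentiableAt (by simp)
  have dGj : ∀ j : Fin 2, ∀ y ∈ Ω, DifferentiableAt ℝ (pd j G) y :=
    fun j y hy => (contDiffAt_pd j (hGc y hy)).differentiableAt (by simp)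
  have hρ : (fun y : R2 => ‖G y‖ ^ 2) = fun y => rin (G y) (G y) := by
    funext y; rw [rin]; exact (real_inner_self_eq_norm_sq _).symm
  -- first derivative of ρ²
  have pdρ : ∀ j : Fin 2, ∀ y ∈ Ω,
      pd j (fun z => ‖G z‖ ^ 2) y = 2 * rin (G y) (pd j G y) := by
    intro j y hy
    rw [hρ, pd_rin j (dG y hy) (dG y hy), rin_comm (pd j G y)]
    ring
  -- second derivatives of ρ²
  have pdpdρ : ∀ j : Fin 2,
      pd j (pd j (fun z => ‖G z‖ ^ 2)) x
        = 2 * (rin (G x) (pd j (pd j G) x) + rin (pd j G x) (pd j G x)) := by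
    intro j
    have hev : pd j (fun z => ‖G z‖ ^ 2) =ᶠ[nhds x]
        fun y => 2 * rin (G y) (pd j G y) :=
      Filter.eventuallyEq_of_mem hΩ (fun y hy => pdρ j y hy)
    have h1 : pd j (pd j (fun z => ‖G z‖ ^ 2)) x
        = pd j (fun y => 2 * rin (G y) (pd j G y)) x := by
      show fderiv ℝ (pd j (fun z => ‖G z‖ ^ 2)) x _ = fderiv ℝ _ x _
      rw [hev.fderiv_eq]
    have hd : DifferentiableAt ℝ (fun y => rin (G y) (pd j G y)) x :=
      (dG x hx).inner ℝ (dGj j x hx)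
    rw [h1, pd_const_mul 2 j hd, pd_rin j (dG x hx) (dGj j x hx)]
  -- second derivatives of φ
  have pdpdφ : ∀ j : Fin 2, pd j (pd j φ) x
      = rin (G x) (JL (pd j (pd j G) x)) + rin (pd j G x) (JL (pd j G x)) := by
    intro j
    have hev : pd j φ =ᶠ[nhds x] fun y => rin (G y) (JL (pd j G y)) :=
      Filter.eventuallyEq_of_mem hΩ
        (fun y hy => by rw [hdat.legendrian y hy j, JL_eq])
    have h1 : pd j (pd j φ) x = pd j (fun y => rin (G y) (JL (pd j G y))) x := by
      show fderiv ℝ (pd j φ) x _ = fderiv ℝ _ x _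
      rw [hev.fderiv_eq]
    have hJg : DifferentiableAt ℝ (fun y => JL (pd j G y)) x :=
      (JL.differentiable.differentiableAt).comp x (dGj j x hx)
    rw [h1, pd_rin j (dG x hx) hJg, pd_clm JL j (dGj j x hx)]
  -- basic quantities
  have hminJ : JL (lap G x)
      = (2 * pd 0 β x) • pd 0 G x + (2 * pd 1 β x) • pd 1 G x := by
    rw [JL_eq]; exact hdat.hminimal x hx
  have e2 : Real.exp (2 * lam x) = Real.exp (lam x) * Real.exp (lam x) := by
    rw [two_mul, Real.exp_add]
  have hg0 : rin (pd 0 G x) (pd 0 G x) = Real.exp (2 * lam x) := by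
    rw [rin, real_inner_self_eq_norm_sq, hdat.conf_norm₁ x hx, e2]; ring
  have hg1 : rin (pd 1 G x) (pd 1 G x) = Real.exp (2 * lam x) := by
    rw [rin, real_inner_self_eq_norm_sq, hdat.conf_norm₂ x hx, e2]; ring
  have hlapGdef : lap G x = pd 0 (pd 0 G) x + pd 1 (pd 1 G) x := rfl
  have hleg : ∀ j : Fin 2, pd j φ x = rin (G x) (JL (pd j G x)) := by
    intro j; rw [JL_eq]; exact hdat.legendrian x hx j
  -- key inner products
  have hA : rin (G x) (JL (lap G x))
      = 2 * pd 0 β x * rin (G x) (pd 0 G x)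
        + 2 * pd 1 β x * rin (G x) (pd 1 G x) := by
    rw [hminJ, rin_add_right, rin_smul_right, rin_smul_right]
  have hB : rin (G x) (lap G x)
      = -(2 * pd 0 β x * rin (G x) (JL (pd 0 G x))
          + 2 * pd 1 β x * rin (G x) (JL (pd 1 G x))) := by
    have h2 : lap G x
        = -(JL ((2 * pd 0 β x) • pd 0 G x + (2 * pd 1 β x) • pd 1 G x)) := by
      rw [← hminJ, JL_JL, neg_neg]
    rw [h2, map_add, _root_.map_smul, _root_.map_smul, rin_neg_right, rin_add_right,
      rin_smul_right, rin_smul_right]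
  -- Laplacians
  have hlapφ : lap φ x = rin (G x) (JL (lap G x)) := by
    show pd 0 (pd 0 φ) x + pd 1 (pd 1 φ) x = _
    rw [pdpdφ 0, pdpdφ 1, rin_self_J, rin_self_J, hlapGdef, map_add,
      rin_add_right]
    ring
  have hlapρ : lap (fun z => ‖G z‖ ^ 2) x
      = 2 * rin (G x) (lap G x) + 4 * Real.exp (2 * lam x) := by
    show pd 0 (pd 0 _) x + pd 1 (pd 1 _) x = _
    rw [pdpdρ 0, pdpdρ 1, hg0, hg1, hlapGdef, rin_add_right]
    ring
  constructor
  · rw [pdρ 0 x hx, pdρ 1 x hx, hlapφ, hA]; ring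
  · rw [hleg 0, hleg 1, hlapρ, hB]; ring
end
end

section
/- Let Ω ⊆ ℝ² be open and let G : Ω → ℂ², φ : Ω → ℝ, λ : Ω → ℝ be smooth maps such that: (conformality/immersion) ⟨∂₁G, ∂₂G⟩ = 0 and |∂₁G| = |∂₂G| = e^λ on Ω; (Lagrangian) ⟨∂₁G, i∂₂G⟩ = 0 on Ω; (Legendrian lift) ∂ⱼφ = ⟨G, i∂ⱼG⟩ on Ω for j = 1,2. Set ρ := |G|, 𝔯 := (ρ⁴ + 4φ²)^{1/4} and σ := 2φ/ρ². Then at every point x ∈ Ω with G(x) ≠ 0: |∇σ|²/(1+σ²)² ≤ 16·e^{2λ}/𝔯². -/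
open MeasureTheory Real Set
noncomputable section

lemma norm_Jc (v : R4) : ‖Jc v‖ = ‖v‖ := by
  simp only [Jc, EuclideanSpace.norm_eq, WithLp.equiv_symm_apply, PiLp.toLp_apply, Fin.sum_univ_four,
    Matrix.cons_val_zero, Matrix.cons_val_one, Matrix.head_cons, Real.norm_eq_abs, sq_abs,
    Matrix.cons_val_two, Matrix.cons_val_three, Matrix.tail_cons, Matrix.head_fin_const]
  ring_nf

lemma key_alg (P E F a b : ℝ) (ha : a ^ 2 ≤ P ^ 2 * E ^ 2) (hb : b ^ 2 ≤ P ^ 2 * E ^ 2) :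
    (2 * b * P ^ 2 - 4 * F * a) ^ 2 ≤ 8 * E ^ 2 * P ^ 2 * (P ^ 4 + 4 * F ^ 2) := by
  nlinarith [sq_nonneg (b * P ^ 2 + 2 * F * a), sq_nonneg (b * P ^ 2 - 2 * F * a),
    mul_le_mul_of_nonneg_left hb (by positivity : (0:ℝ) ≤ 4 * P ^ 4),
    mul_le_mul_of_nonneg_left ha (by positivity : (0:ℝ) ≤ 16 * F ^ 2)]

/-- The pointwise estimate (k-12-rep) of the paper in conformal (flat) form: for a
conformal Lagrangian immersion with Legendrian lift, away from zeros of `G`,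
`|∇σ|²/(1+σ²)² ≤ 16e^{2λ}/𝔯²`. -/
theorem phase_energy_pointwise_bound (Ω : Set R2) (hΩ : IsOpen Ω)
    (G : R2 → R4) (φ lam : R2 → ℝ)
    (hG : ∀ x ∈ Ω, ContDiffAt ℝ (⊤ : ℕ∞) G x)
    (hφ : ∀ x ∈ Ω, ContDiffAt ℝ (⊤ : ℕ∞) φ x)
    (hlam : ∀ x ∈ Ω, ContDiffAt ℝ (⊤ : ℕ∞) lam x)
    (horth : ∀ x ∈ Ω, rin (pd 0 G x) (pd 1 G x) = 0)
    (hnorm₁ : ∀ x ∈ Ω, ‖pd 0 G x‖ = Real.exp (lam x))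
    (hnorm₂ : ∀ x ∈ Ω, ‖pd 1 G x‖ = Real.exp (lam x))
    (hlag : ∀ x ∈ Ω, rin (pd 0 G x) (Jc (pd 1 G x)) = 0)
    (hleg : ∀ x ∈ Ω, ∀ j : Fin 2, pd j φ x = rin (G x) (Jc (pd j G x))) :
    ∀ x ∈ Ω, G x ≠ 0 →
      ((pd 0 (phase G φ) x) ^ 2 + (pd 1 (phase G φ) x) ^ 2) /
          (1 + (phase G φ x) ^ 2) ^ 2 ≤
        16 * Real.exp (2 * lam x) / (kGauge G φ x) ^ 2 := by
  intro x hx hGx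
  set P : ℝ := ‖G x‖ with hPdef
  have hP0 : 0 < P := norm_pos_iff.mpr hGx
  set F : ℝ := φ x with hFdef
  set E : ℝ := Real.exp (lam x) with hEdef
  have hE0 : 0 < E := Real.exp_pos _
  have hGd : DifferentiableAt ℝ G x := (hG x hx).differentiableAt (by simp)
  have hφd : DifferentiableAt ℝ φ x := (hφ x hx).differentiableAt (by simp)
  set a : Fin 2 → ℝ := fun j => rin (G x) (pd j G x) with hadef
  set b : Fin 2 → ℝ := fun j => rin (G x) (Jc (pd j G x)) with hbdef
  -- bounds on a and b
  have hnorm : ∀ j : Fin 2, ‖pd j G x‖ = E := by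
    intro j
    fin_cases j
    · exact hnorm₁ x hx
    · exact hnorm₂ x hx
  have ha : ∀ j : Fin 2, (a j) ^ 2 ≤ P ^ 2 * E ^ 2 := by
    intro j
    have h1 : |a j| ≤ P * E := by
      have := abs_real_inner_le_norm (G x) (pd j G x)
      rwa [hnorm j] at this
    calc (a j) ^ 2 = |a j| ^ 2 := (sq_abs _).symm
      _ ≤ (P * E) ^ 2 := pow_le_pow_left₀ (abs_nonneg _) h1 2
      _ = P ^ 2 * E ^ 2 := by ring
  have hb : ∀ j : Fin 2, (b j) ^ 2 ≤ P ^ 2 * E ^ 2 := by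
    intro j
    have h1 : |b j| ≤ P * E := by
      have := abs_real_inner_le_norm (G x) (Jc (pd j G x))
      rwa [norm_Jc, hnorm j] at this
    calc (b j) ^ 2 = |b j| ^ 2 := (sq_abs _).symm
      _ ≤ (P * E) ^ 2 := pow_le_pow_left₀ (abs_nonneg _) h1 2
      _ = P ^ 2 * E ^ 2 := by ring
  -- derivative of the phase
  have hGf : HasFDerivAt G (fderiv ℝ G x) x := hGd.hasFDerivAt
  have hNsq : HasFDerivAt (fun y => ‖G y‖ ^ 2)
      ((fderivInnerCLM ℝ (G x, G x)).comp ((fderiv ℝ G x).prod (fderiv ℝ G x))) x := by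
    have h := hGf.inner ℝ hGf
    simpa only [real_inner_self_eq_norm_sq] using h
  have hden : ‖G x‖ ^ 2 ≠ 0 := by positivity
  have hnum : HasFDerivAt (fun y => 2 * φ y) ((2:ℝ) • fderiv ℝ φ x) x :=
    hφd.hasFDerivAt.const_mul 2
  have hinv : HasFDerivAt (fun y => (‖G y‖ ^ 2)⁻¹)
      ((ContinuousLinearMap.smulRight (1 : ℝ →L[ℝ] ℝ) (-((‖G x‖ ^ 2) ^ 2)⁻¹)).comp
        ((fderivInnerCLM ℝ (G x, G x)).comp ((fderiv ℝ G x).prod (fderiv ℝ G x)))) x :=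
    (hasFDerivAt_inv hden).comp x hNsq
  have hmul : HasFDerivAt (fun y => 2 * φ y * (‖G y‖ ^ 2)⁻¹) _ x := hnum.mul hinv
  have hfun : phase G φ = fun y => (2 * φ y) * (‖G y‖ ^ 2)⁻¹ := by
    funext y; simp [phase, div_eq_mul_inv]
  have hS : ∀ j : Fin 2, pd j (phase G φ) x = (2 * b j * P ^ 2 - 4 * F * a j) / P ^ 4 := by
    intro j
    have hb' : pd j φ x = b j := hleg x hx j
    rw [pd, hfun, hmul.fderiv]
    simp only [ContinuousLinearMap.coe_add', Pi.add_apply, ContinuousLinearMap.coe_smul',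
      Pi.smul_apply, ContinuousLinearMap.coe_comp', Function.comp_apply,
      ContinuousLinearMap.prod_apply, fderivInnerCLM_apply, smul_eq_mul,
      ContinuousLinearMap.smulRight_apply, ContinuousLinearMap.one_apply]
    have hfd : fderiv ℝ φ x (EuclideanSpace.single j 1) = b j := hb'
    have hfG : (inner ℝ (G x) (fderiv ℝ G x (EuclideanSpace.single j 1)) : ℝ) = a j := rfl
    have hfG' : (inner ℝ (fderiv ℝ G x (EuclideanSpace.single j 1)) (G x) : ℝ) = a j := by
      rw [real_inner_comm]; rfl
    rw [hfd, hfG, hfG', ← hPdef, ← hFdef]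
    field_simp
    ring
  -- the value of the phase
  have hσ : phase G φ x = 2 * F / P ^ 2 := rfl
  -- gauge
  set r4 : ℝ := P ^ 4 + 4 * F ^ 2 with hr4def
  have hr4 : 0 < r4 := by positivity
  set sr : ℝ := Real.sqrt r4 with hsrdef
  have hsr0 : 0 < sr := Real.sqrt_pos.mpr hr4
  have hsrsq : sr * sr = r4 := Real.mul_self_sqrt hr4.le
  have hP2sr : P ^ 2 ≤ sr := by
    rw [hsrdef]
    have : P ^ 2 = Real.sqrt (P ^ 4) := by
      rw [show P ^ 4 = (P ^ 2) ^ 2 by ring, Real.sqrt_sq (by positivity)]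
    rw [this]
    exact Real.sqrt_le_sqrt (by nlinarith [sq_nonneg F])
  have hk : (kGauge G φ x) ^ 2 = sr := by
    rw [kGauge, ← hPdef, ← hFdef, ← hr4def, hsrdef, ← Real.rpow_natCast (r4 ^ ((1:ℝ)/4)) 2,
      ← Real.rpow_mul hr4.le, Real.sqrt_eq_rpow]
    norm_num
  -- final computation
  rw [hS 0, hS 1, hσ, hk]
  set T0 : ℝ := 2 * b 0 * P ^ 2 - 4 * F * a 0 with hT0
  set T1 : ℝ := 2 * b 1 * P ^ 2 - 4 * F * a 1 with hT1
  have hLHS : ((T0 / P ^ 4) ^ 2 + (T1 / P ^ 4) ^ 2) / (1 + (2 * F / P ^ 2) ^ 2) ^ 2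
      = (T0 ^ 2 + T1 ^ 2) / r4 ^ 2 := by
    rw [hr4def]
    field_simp
    ring
  rw [hLHS, div_le_div_iff₀ (by positivity) hsr0]
  have key : T0 ^ 2 + T1 ^ 2 ≤ 16 * E ^ 2 * P ^ 2 * r4 := by
    have h0 := key_alg P E F (a 0) (b 0) (ha 0) (hb 0)
    have h1 := key_alg P E F (a 1) (b 1) (ha 1) (hb 1)
    rw [hT0, hT1, hr4def]; nlinarith [h0, h1]
  have hE2 : Real.exp (2 * lam x) = E ^ 2 := by
    rw [hEdef, ← Real.exp_nat_mul]; norm_num [mul_comm]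
  rw [hE2]
  calc (T0 ^ 2 + T1 ^ 2) * sr ≤ (16 * E ^ 2 * P ^ 2 * r4) * sr :=
        mul_le_mul_of_nonneg_right key hsr0.le
    _ ≤ (16 * E ^ 2 * sr * r4) * sr := by gcongr
    _ = 16 * E ^ 2 * r4 ^ 2 := by
        rw [show (16 * E ^ 2 * sr * r4) * sr = 16 * E ^ 2 * r4 * (sr * sr) by ring, hsrsq]; ring
end
end
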